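/- Let a : R^d → [0,∞) be integrable with finite second moment, Ω ⊂ R^d open and bounded, u ∈ C¹(R^d) with bounded and uniformly continuous gradient. Then lim_{ε→0} ∫_Ω ∫_{{ξ : x+εξ ∈ Ω}} a(ξ) ((u(x+εξ)-u(x))/ε)² dξ dx = ∫_Ω ∫_{R^d} a(ξ) ⟨∇u(x), ξ⟩² dξ dx. -/

import Mathlib

/-!
For fixed `x ∈ Ω` the difference quotient `(u (x + ε • ξ) - u x) / ε` tends to `⟪∇u x, ξ⟫`,
and `x + ε • ξ ∈ Ω` for all small `ε` because `Ω` is open. By the mean value inequality the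
integrand is bounded by `M² a(ξ) ‖ξ‖²`, where `M` bounds `‖∇u‖`; this is integrable, so dominated
convergence gives the limit of the inner integral. The same bound makes the inner integrals
uniformly bounded in `x`, and since `Ω` has finite measure a second application of dominated
convergence in `x` concludes.
-/

open MeasureTheory Filter Set
open scoped RealInnerProductSpace Topology

section SetIntegral

variable {α β ι G : Type*} [MeasurableSpace α] [MeasurableSpace β] {μ : Measure α}
  {ν : Measure β} [NormedAddCommGroup G] [NormedSpace ℝ G]

theorem tendsto_setIntegral_of_dominated_of_eventually_mem {l : Filter ι}
    [l.IsCountablyGenerated] {F : ι → α → G} {f : α → G} {S : ι → Set α} (bound : α → ℝ)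
    (hS : ∀ i, MeasurableSet (S i)) (hF_meas : ∀ᶠ i in l, AEStronglyMeasurable (F i) μ)
    (h_bound : ∀ᶠ i in l, ∀ᵐ x ∂μ, ‖F i x‖ ≤ bound x) (bound_integrable : Integrable bound μ)
    (h_lim : ∀ᵐ x ∂μ, Tendsto (fun i => F i x) l (𝓝 (f x)) ∧ ∀ᶠ i in l, x ∈ S i) :
    Tendsto (fun i => ∫ x in S i, F i x ∂μ) l (𝓝 (∫ x, f x ∂μ)) := by
  simp_rw [← integral_indicator (hS _)]
  refine tendsto_integral_filter_of_dominated_convergence bound ?_ ?_ bound_integrable ?_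
  · filter_upwards [hF_meas] with i hi using hi.indicator (hS i)
  · filter_upwards [h_bound] with i hi
    filter_upwards [hi] with x hx using (norm_indicator_le_norm_self _ _).trans hx
  · filter_upwards [h_lim] with x ⟨hlim, hmem⟩
    refine hlim.congr' ?_
    filter_upwards [hmem] with i hi using (indicator_of_mem hi _).symm

theorem MeasureTheory.StronglyMeasurable.setIntegral_prodMk_preimage [SFinite ν] {S : Set (α × β)}
    (hS : MeasurableSet S) {f : α × β → G} (hf : StronglyMeasurable f) :
    StronglyMeasurable fun x => ∫ y in Prod.mk x ⁻¹' S, f (x, y) ∂ν := by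
  have hind : ∀ x y, (Prod.mk x ⁻¹' S).indicator (fun y => f (x, y)) y = S.indicator f (x, y) :=
    fun x y => indicator_comp_right (Prod.mk x)
  simp_rw [← integral_indicator (measurable_prodMk_left hS), hind]
  exact (hf.indicator hS).integral_prod_right'

end SetIntegral

section Gradient

variable {E : Type*} [NormedAddCommGroup E] [InnerProductSpace ℝ E] [CompleteSpace E]
  {a u : E → ℝ} {M : ℝ}

theorem abs_sub_le_of_norm_gradient_le (hu : Differentiable ℝ u)
    (hM : ∀ x, ‖gradient u x‖ ≤ M) (y z : E) : |u y - u z| ≤ M * ‖y - z‖ :=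
  Convex.norm_image_sub_le_of_norm_fderiv_le (fun x _ => hu x)
    (fun x _ => by simpa [gradient] using hM x) convex_univ (mem_univ z) (mem_univ y)

theorem sq_div_sub_le_of_norm_gradient_le (hu : Differentiable ℝ u)
    (hM : ∀ x, ‖gradient u x‖ ≤ M) (x ξ : E) {ε : ℝ} (hε : ε ≠ 0) :
    ((u (x + ε • ξ) - u x) / ε) ^ 2 ≤ M ^ 2 * ‖ξ‖ ^ 2 := by
  have hlip := abs_sub_le_of_norm_gradient_le hu hM (x + ε • ξ) x
  rw [add_sub_cancel_left, norm_smul, Real.norm_eq_abs] at hlip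
  have hquot : |(u (x + ε • ξ) - u x) / ε| ≤ M * ‖ξ‖ := by
    rw [abs_div, div_le_iff₀ (abs_pos.2 hε)]
    linarith
  calc ((u (x + ε • ξ) - u x) / ε) ^ 2 = |(u (x + ε • ξ) - u x) / ε| ^ 2 := (sq_abs _).symm
    _ ≤ (M * ‖ξ‖) ^ 2 := pow_le_pow_left₀ (abs_nonneg _) hquot 2
    _ = M ^ 2 * ‖ξ‖ ^ 2 := mul_pow _ _ _

theorem tendsto_div_sub_inner_gradient {x : E} (hu : DifferentiableAt ℝ u x) (ξ : E) :
    Tendsto (fun ε : ℝ => (u (x + ε • ξ) - u x) / ε) (𝓝[≠] 0) (𝓝 ⟪gradient u x, ξ⟫) := by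
  rw [inner_gradient_left]
  simpa [div_eq_inv_mul] using (hu.hasFDerivAt.hasLineDerivAt ξ).tendsto_slope_zero

theorem norm_mul_sq_div_sub_le (hu : Differentiable ℝ u) (hM : ∀ x, ‖gradient u x‖ ≤ M)
    {ξ : E} (hnn : 0 ≤ a ξ) (x : E) {ε : ℝ} (hε : ε ≠ 0) :
    ‖a ξ * ((u (x + ε • ξ) - u x) / ε) ^ 2‖ ≤ M ^ 2 * (a ξ * ‖ξ‖ ^ 2) := by
  rw [Real.norm_of_nonneg (by positivity), mul_left_comm]
  exact mul_le_mul_of_nonneg_left (sq_div_sub_le_of_norm_gradient_le hu hM x ξ hε) hnn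

end Gradient

theorem stronglyMeasurable_setIntegral_mul_sq_div_sub {E : Type*} [NormedAddCommGroup E]
    [NormedSpace ℝ E] [MeasurableSpace E] [BorelSpace E] [SecondCountableTopology E]
    {μ : Measure E} [SFinite μ] {a u : E → ℝ} {Ω : Set E} (ha : Measurable a) (hΩ : IsOpen Ω)
    (hu : Continuous u) (ε : ℝ) :
    StronglyMeasurable fun x =>
      ∫ ξ in {ξ | x + ε • ξ ∈ Ω}, a ξ * ((u (x + ε • ξ) - u x) / ε) ^ 2 ∂μ := by
  have hquot : Measurable fun p : E × E => ((u (p.1 + ε • p.2) - u p.1) / ε) ^ 2 := by fun_prop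
  exact StronglyMeasurable.setIntegral_prodMk_preimage (S := {p : E × E | p.1 + ε • p.2 ∈ Ω})
    (hΩ.preimage (by fun_prop)).measurableSet
    ((ha.comp measurable_snd).mul hquot).stronglyMeasurable

section Energy

variable {E : Type*} [NormedAddCommGroup E] [InnerProductSpace ℝ E] [CompleteSpace E]
  [MeasurableSpace E] {μ : Measure E} {a u : E → ℝ} {M : ℝ} {Ω : Set E}

theorem norm_setIntegral_mul_sq_div_sub_le (hnn : ∀ ξ, 0 ≤ a ξ)
    (hmom : Integrable (fun ξ => a ξ * ‖ξ‖ ^ 2) μ) (hu : Differentiable ℝ u)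
    (hM : ∀ x, ‖gradient u x‖ ≤ M) (x : E) (S : Set E) {ε : ℝ} (hε : ε ≠ 0) :
    ‖∫ ξ in S, a ξ * ((u (x + ε • ξ) - u x) / ε) ^ 2 ∂μ‖ ≤ M ^ 2 * ∫ ξ, a ξ * ‖ξ‖ ^ 2 ∂μ := by
  calc ‖∫ ξ in S, a ξ * ((u (x + ε • ξ) - u x) / ε) ^ 2 ∂μ‖
      ≤ ∫ ξ in S, M ^ 2 * (a ξ * ‖ξ‖ ^ 2) ∂μ :=
        norm_integral_le_of_norm_le (hmom.const_mul _).integrableOn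
          (ae_of_all _ fun ξ => norm_mul_sq_div_sub_le hu hM (hnn ξ) x hε)
    _ ≤ ∫ ξ, M ^ 2 * (a ξ * ‖ξ‖ ^ 2) ∂μ :=
        setIntegral_le_integral (hmom.const_mul _)
          (ae_of_all _ fun ξ => mul_nonneg (sq_nonneg M) (mul_nonneg (hnn ξ) (sq_nonneg _)))
    _ = M ^ 2 * ∫ ξ, a ξ * ‖ξ‖ ^ 2 ∂μ := integral_const_mul _ _

theorem tendsto_setIntegral_mul_sq_div_sub [BorelSpace E] (ha : Measurable a) (hnn : ∀ ξ, 0 ≤ a ξ)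
    (hmom : Integrable (fun ξ => a ξ * ‖ξ‖ ^ 2) μ) (hΩ : IsOpen Ω) (hu : Differentiable ℝ u)
    (hM : ∀ x, ‖gradient u x‖ ≤ M) {x : E} (hx : x ∈ Ω) :
    Tendsto (fun ε : ℝ => ∫ ξ in {ξ | x + ε • ξ ∈ Ω}, a ξ * ((u (x + ε • ξ) - u x) / ε) ^ 2 ∂μ)
      (𝓝[≠] 0) (𝓝 (∫ ξ, a ξ * ⟪gradient u x, ξ⟫ ^ 2 ∂μ)) := by
  have hucont := hu.continuous
  refine tendsto_setIntegral_of_dominated_of_eventually_mem (fun ξ => M ^ 2 * (a ξ * ‖ξ‖ ^ 2))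
    (fun ε => (hΩ.preimage (by fun_prop)).measurableSet)
    (Eventually.of_forall fun ε => (ha.mul (by fun_prop)).aestronglyMeasurable)
    ?_ (hmom.const_mul _) (ae_of_all _ fun ξ => ⟨?_, ?_⟩)
  · filter_upwards [self_mem_nhdsWithin] with ε hε
    exact ae_of_all _ fun ξ => norm_mul_sq_div_sub_le hu hM (hnn ξ) x hε
  · exact ((tendsto_div_sub_inner_gradient (hu x) ξ).pow 2).const_mul (a ξ)
  · have hlim : Tendsto (fun ε : ℝ => x + ε • ξ) (𝓝 0) (𝓝 x) :=
      Continuous.tendsto' (by fun_prop) 0 x (by simp)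
    exact nhdsWithin_le_nhds (hlim.eventually (hΩ.mem_nhds hx))

end Energy

theorem energy_limit_C1_general {d : ℕ} (a : EuclideanSpace ℝ (Fin d) → ℝ)
    (ha : Measurable a) (hnn : ∀ ξ, 0 ≤ a ξ)
    (hmom : Integrable (fun ξ => a ξ * ‖ξ‖ ^ 2))
    (Ω : Set (EuclideanSpace ℝ (Fin d))) (hΩ : IsOpen Ω)
    (hbdd : Bornology.IsBounded Ω)
    (u : EuclideanSpace ℝ (Fin d) → ℝ) (hu : ContDiff ℝ 1 u)
    (hgradbdd : ∃ M : ℝ, ∀ x, ‖gradient u x‖ ≤ M) :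
    Tendsto (fun ε : ℝ =>
        ∫ x in Ω, ∫ ξ in {ξ | x + ε • ξ ∈ Ω},
          a ξ * ((u (x + ε • ξ) - u x) / ε) ^ 2)
      (𝓝[>] 0)
      (𝓝 (∫ x in Ω, ∫ ξ : EuclideanSpace ℝ (Fin d),
        a ξ * ⟪gradient u x, ξ⟫ ^ 2)) := by
  obtain ⟨M, hM⟩ := hgradbdd
  have hud : Differentiable ℝ u := hu.differentiable one_ne_zero
  refine tendsto_integral_filter_of_dominated_convergence (fun _ => M ^ 2 * ∫ ξ, a ξ * ‖ξ‖ ^ 2)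
    (Eventually.of_forall fun ε =>
      (stronglyMeasurable_setIntegral_mul_sq_div_sub ha hΩ hud.continuous ε).aestronglyMeasurable)
    ?_ ?_ (ae_restrict_of_forall_mem hΩ.measurableSet fun x hx =>
      (tendsto_setIntegral_mul_sq_div_sub ha hnn hmom hΩ hud hM hx).mono_left
        (nhdsGT_le_nhdsNE 0))
  · filter_upwards [self_mem_nhdsWithin] with ε (hε : 0 < ε)
    exact ae_of_all _ fun x => norm_setIntegral_mul_sq_div_sub_le hnn hmom hud hM x _ hε.ne'
  · exact integrableOn_const hbdd.measure_lt_top.ne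

/-- convergence of the scaled convolution energies on a solid domain:
for `u ∈ C¹` with bounded, uniformly continuous gradient,
`∫_Ω ∫_{{ξ : x+εξ ∈ Ω}} a(ξ)((u(x+εξ)-u(x))/ε)² → ∫_Ω ∫ a(ξ)⟨∇u(x),ξ⟩²` as `ε → 0⁺`. -/
theorem energy_limit_C1 {d : ℕ} (a : EuclideanSpace ℝ (Fin d) → ℝ)
    (ha : Measurable a) (hnn : ∀ ξ, 0 ≤ a ξ) (hint : Integrable a)
    (hmom : Integrable (fun ξ => a ξ * ‖ξ‖ ^ 2))
    (Ω : Set (EuclideanSpace ℝ (Fin d))) (hΩ : IsOpen Ω)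
    (hbdd : Bornology.IsBounded Ω)
    (u : EuclideanSpace ℝ (Fin d) → ℝ) (hu : ContDiff ℝ 1 u)
    (hgradbdd : ∃ M : ℝ, ∀ x, ‖gradient u x‖ ≤ M)
    (hgraduc : UniformContinuous (gradient u)) :
    Tendsto (fun ε : ℝ =>
        ∫ x in Ω, ∫ ξ in {ξ | x + ε • ξ ∈ Ω},
          a ξ * ((u (x + ε • ξ) - u x) / ε) ^ 2)
      (𝓝[>] 0)
      (𝓝 (∫ x in Ω, ∫ ξ : EuclideanSpace ℝ (Fin d),
        a ξ * ⟪gradient u x, ξ⟫ ^ 2)) :=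
  energy_limit_C1_general a ha hnn hmom Ω hΩ hbdd u hu hgradbdd
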